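/- Let L : ℝ → ℝ be Lipschitz with constant ℓ, satisfy L(x) = 0 whenever |x| > 1, and satisfy ∫_ℝ L(x) dx = 1. Let T > 0, let n ≥ 1 be an integer and 0 < c̲ ≤ c̄, and let 0 = t_0 < t_1 < ⋯ < t_n = T be real numbers with c̲/n ≤ t_j − t_{j−1} ≤ c̄/n for every j. Then for every b > 0 and every t with b ≤ t ≤ T − b, | ∑_{j=1}^n (t_j − t_{j−1}) · L_b(t_j − t) − 1 | ≤ ℓ c̄² / (c̲ n b) + ℓ c̄² / (n² b²). -/

import Mathlib

/-!
Put `f = L_b(· - τ)`. It is supported in `[τ - b, τ + b] ⊆ [0, T]` and has integral one, so the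
quantity to bound is the error of the right-endpoint Riemann sum of `f` on the grid. `f` is
`ℓ / b²`-Lipschitz, so the error on a cell of length `Δ` is at most `ℓ Δ² / (2 b²)`, and it vanishes
on cells missing the support. The cells meeting the support have total length at most
`2 b + 2 c̄ / n`, which gives `ℓ c̄ / (n b) + ℓ c̄² / (n² b²)`; finally `c̄ / c̲ ≥ 1`.
-/

open MeasureTheory Set Finset
open scoped NNReal Interval

theorem Finset.sum_Icc_one_eq_sum_range {M : Type*} [AddCommMonoid M] (g : ℕ → M) (n : ℕ) :
    ∑ j ∈ Finset.Icc 1 n, g j = ∑ i ∈ range n, g (i + 1) := by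
  rw [range_eq_Ico, sum_Ico_add', zero_add, Finset.Ico_add_one_right_eq_Icc]

theorem LipschitzOnWith.abs_right_rectangle_sub_integral_le {f : ℝ → ℝ} {K : ℝ≥0} {a c : ℝ}
    (hac : a ≤ c) (hf : LipschitzOnWith K f (Icc a c)) :
    |(c - a) * f c - ∫ s in a..c, f s| ≤ K / 2 * (c - a) ^ 2 := by
  have hfi : IntervalIntegrable f volume a c :=
    (hf.continuousOn.mono (uIcc_of_le hac).subset).intervalIntegrable
  have hpt : ∀ s ∈ Icc a c, |f c - f s| ≤ K * (c - s) := fun s hs => by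
    simpa [Real.dist_eq, abs_of_nonneg (sub_nonneg.2 hs.2)] using
      hf.dist_le_mul c (right_mem_Icc.2 hac) s hs
  calc |(c - a) * f c - ∫ s in a..c, f s|
      = |∫ s in a..c, (f c - f s)| := by
        rw [intervalIntegral.integral_sub intervalIntegrable_const hfi,
          intervalIntegral.integral_const, smul_eq_mul]
    _ ≤ ∫ s in a..c, |f c - f s| := intervalIntegral.abs_integral_le_integral_abs hac
    _ ≤ ∫ s in a..c, K * (c - s) :=
        intervalIntegral.integral_mono_on hac (intervalIntegrable_const.sub hfi).abs
          (Continuous.intervalIntegrable (by fun_prop) _ _) hpt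
    _ = K / 2 * (c - a) ^ 2 := by
        rw [intervalIntegral.integral_const_mul,
          intervalIntegral.integral_comp_sub_left (fun x => x), integral_id]
        ring

/- A cell of length at most `h` that meets `Icc α β` lies inside `Icc (α - h) (β + h)`, so the
integral of the indicator over the cell is its length; otherwise the error vanishes. -/
theorem LipschitzWith.abs_right_rectangle_sub_integral_le_integral_indicator {f : ℝ → ℝ}
    {K : ℝ≥0} {α β h a c : ℝ} (hf : LipschitzWith K f) (hsupp : Function.support f ⊆ Icc α β)
    (hac : a ≤ c) (hgap : c - a ≤ h) :
    |(c - a) * f c - ∫ s in a..c, f s| ≤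
      K * h / 2 * ∫ s in a..c, (Icc (α - h) (β + h)).indicator 1 s := by
  by_cases hcell : Icc a c ⊆ Icc (α - h) (β + h)
  · have hlen : ∫ s in a..c, (Icc (α - h) (β + h)).indicator (1 : ℝ → ℝ) s = c - a := by
      rw [intervalIntegral.integral_congr (g := fun _ => (1 : ℝ)), intervalIntegral.integral_const,
        smul_eq_mul, mul_one]
      intro s hs
      rw [uIcc_of_le hac] at hs
      simp [indicator_of_mem (hcell hs)]
    rw [hlen]
    calc _ ≤ K / 2 * (c - a) ^ 2 := hf.lipschitzOnWith.abs_right_rectangle_sub_integral_le hac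
      _ ≤ K * h / 2 * (c - a) := by
        nlinarith [mul_nonneg (mul_nonneg K.coe_nonneg (sub_nonneg.2 hac)) (sub_nonneg.2 hgap)]
  · have hzero : ∀ s ∈ Icc a c, f s = 0 := by
      rw [Icc_subset_Icc_iff hac] at hcell
      intro s hs
      refine Function.notMem_support.1 fun hs' => hcell ⟨?_, ?_⟩ <;>
        linarith [(hsupp hs').1, (hsupp hs').2, hs.1, hs.2]
    rw [hzero c (right_mem_Icc.2 hac), intervalIntegral.integral_congr (g := fun _ => 0)
      (by rwa [uIcc_of_le hac]), intervalIntegral.integral_zero, mul_zero, sub_zero, abs_zero]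
    have : 0 ≤ h := (sub_nonneg.2 hac).trans hgap
    exact mul_nonneg (by positivity) (intervalIntegral.integral_nonneg hac
      fun _ _ => indicator_nonneg (fun _ _ => zero_le_one) _)

theorem intervalIntegral_indicator_one_le_volume_real {S : Set ℝ} (hS : MeasurableSet S)
    (hS' : volume S ≠ ⊤) (a b : ℝ) :
    ∫ s in a..b, S.indicator 1 s ≤ volume.real S := by
  have hint : Integrable (S.indicator (1 : ℝ → ℝ)) :=
    (integrableOn_const hS').integrable_indicator hS
  calc ∫ s in a..b, S.indicator 1 s ≤ ‖∫ s in a..b, S.indicator (1 : ℝ → ℝ) s‖ :=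
        Real.le_norm_self _
    _ ≤ ∫ s in Ι a b, ‖S.indicator (1 : ℝ → ℝ) s‖ :=
        intervalIntegral.norm_integral_le_integral_norm_uIoc
    _ ≤ ∫ s, ‖S.indicator (1 : ℝ → ℝ) s‖ :=
        setIntegral_le_integral hint.norm (Filter.Eventually.of_forall fun _ => norm_nonneg _)
    _ = volume.real S := by
        rw [← integral_indicator_one hS]
        congr with s
        exact Real.norm_of_nonneg (indicator_nonneg (fun _ _ => zero_le_one) s)

theorem LipschitzWith.abs_right_riemann_sum_sub_integral_le {f : ℝ → ℝ} {K : ℝ≥0}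
    {α β h : ℝ} (hf : LipschitzWith K f) (hsupp : Function.support f ⊆ Icc α β)
    (hαβ : α ≤ β) (hh : 0 ≤ h) {t : ℕ → ℝ} {n : ℕ} (hmono : ∀ i < n, t i ≤ t (i + 1))
    (hgap : ∀ i < n, t (i + 1) - t i ≤ h) :
    |∑ i ∈ range n, (t (i + 1) - t i) * f (t (i + 1)) - ∫ s in t 0..t n, f s| ≤
      K * h / 2 * (β - α + 2 * h) := by
  set g : ℝ → ℝ := (Icc (α - h) (β + h)).indicator 1
  have hg : ∀ a b, IntervalIntegrable g volume a b := fun a b =>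
    ((integrableOn_const (by simp)).integrable_indicator measurableSet_Icc).intervalIntegrable
  calc _ = |∑ i ∈ range n,
          ((t (i + 1) - t i) * f (t (i + 1)) - ∫ s in t i..t (i + 1), f s)| := by
        rw [sum_sub_distrib, intervalIntegral.sum_integral_adjacent_intervals
          fun i _ => hf.continuous.intervalIntegrable _ _]
    _ ≤ ∑ i ∈ range n, K * h / 2 * ∫ s in t i..t (i + 1), g s :=
        (abs_sum_le_sum_abs _ _).trans <| sum_le_sum fun i hi =>
          hf.abs_right_rectangle_sub_integral_le_integral_indicator hsupp
            (hmono i (mem_range.1 hi)) (hgap i (mem_range.1 hi))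
    _ = K * h / 2 * ∫ s in t 0..t n, g s := by
        rw [← mul_sum, intervalIntegral.sum_integral_adjacent_intervals fun i _ => hg _ _]
    _ ≤ K * h / 2 * (β - α + 2 * h) := by
        gcongr
        refine (intervalIntegral_indicator_one_le_volume_real measurableSet_Icc
          (by simp) _ _).trans ?_
        rw [Real.volume_real_Icc_of_le (by linarith)]
        linarith

noncomputable def rescaledKernel (L : ℝ → ℝ) (b u : ℝ) : ℝ := b⁻¹ * L (u / b)

section RescaledKernel

variable {L : ℝ → ℝ} {b : ℝ}

theorem lipschitzWith_rescaledKernel {K : ℝ≥0} (hL : LipschitzWith K L) (hb : 0 < b) :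
    LipschitzWith (K / b.toNNReal ^ 2) (rescaledKernel L b) := by
  refine .of_dist_le_mul fun x y => ?_
  have hxy : dist (L (x / b)) (L (y / b)) ≤ K * (dist x y / b) := by
    simpa [Real.dist_eq, ← sub_div, abs_div, abs_of_pos hb] using hL.dist_le_mul (x / b) (y / b)
  simp only [rescaledKernel, Real.dist_eq, ← mul_sub, abs_mul, abs_inv, abs_of_pos hb,
    NNReal.coe_div, NNReal.coe_pow, Real.coe_toNNReal _ hb.le] at hxy ⊢
  calc b⁻¹ * |L (x / b) - L (y / b)| ≤ b⁻¹ * (K * (|x - y| / b)) := by gcongr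
    _ = K / b ^ 2 * |x - y| := by field_simp

theorem support_rescaledKernel_subset (hL : Function.support L ⊆ Icc (-1) 1) (hb : 0 < b) :
    Function.support (rescaledKernel L b) ⊆ Icc (-b) b := fun u hu => by
  have := @hL (u / b) fun h => hu (by simp [rescaledKernel, h])
  rwa [Set.mem_Icc, le_div_iff₀ hb, div_le_iff₀ hb, neg_one_mul, one_mul] at this

theorem integral_rescaledKernel (hb : 0 < b) :
    ∫ u, rescaledKernel L b u = ∫ x, L x := by
  simp only [rescaledKernel]
  rw [integral_const_mul, Measure.integral_comp_div, abs_of_pos hb, smul_eq_mul,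
    inv_mul_cancel_left₀ hb.ne']

theorem lipschitzWith_rescaledKernel_comp_sub {K : ℝ≥0} (hL : LipschitzWith K L) (hb : 0 < b)
    (τ : ℝ) : LipschitzWith (K / b.toNNReal ^ 2) fun s => rescaledKernel L b (s - τ) := by
  have := (lipschitzWith_rescaledKernel hL hb).comp (IsometryEquiv.subRight τ).isometry.lipschitz
  rwa [mul_one] at this

theorem support_rescaledKernel_comp_sub_subset (hL : Function.support L ⊆ Icc (-1) 1)
    (hb : 0 < b) (τ : ℝ) :
    Function.support (fun s => rescaledKernel L b (s - τ)) ⊆ Icc (τ - b) (τ + b) := by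
  rw [show (fun s => rescaledKernel L b (s - τ)) = rescaledKernel L b ∘ (· - τ) from rfl,
    Function.support_comp_eq_preimage]
  refine (preimage_mono (support_rescaledKernel_subset hL hb)).trans ?_
  rw [preimage_sub_const_Icc, neg_add_eq_sub, add_comm]

theorem intervalIntegral_rescaledKernel_comp_sub (hL : Function.support L ⊆ Icc (-1) 1)
    (hb : 0 < b) {τ a c : ℝ} (ha : a ≤ τ - b) (hc : τ + b ≤ c) :
    ∫ s in a..c, rescaledKernel L b (s - τ) = ∫ x, L x := by
  have hzero : ∀ s ∉ Icc a c, rescaledKernel L b (s - τ) = 0 := fun s hs =>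
    Function.notMem_support.1 fun h => hs <| by
      have := support_rescaledKernel_comp_sub_subset hL hb τ h
      exact ⟨by linarith [this.1], by linarith [this.2]⟩
  rw [intervalIntegral.integral_of_le (by linarith), ← integral_Icc_eq_integral_Ioc,
    setIntegral_eq_integral_of_forall_compl_eq_zero hzero,
    integral_sub_right_eq_self (fun u => rescaledKernel L b u), integral_rescaledKernel hb]

end RescaledKernel

theorem kernel_weight_sum_near_one_general
    (L : ℝ → ℝ) (ℓ : ℝ)
    (hLip : ∀ x y : ℝ, |L x - L y| ≤ ℓ * |x - y|)
    (hsupp : ∀ x : ℝ, 1 < |x| → L x = 0)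
    (hint : ∫ x : ℝ, L x = 1)
    (T : ℝ)
    (n : ℕ) (hn : 1 ≤ n) (clow cbar : ℝ) (hclow : 0 < clow) (hcc : clow ≤ cbar)
    (t : ℕ → ℝ) (ht0 : t 0 = 0) (htn : t n = T)
    (hgap_low : ∀ j : ℕ, 1 ≤ j → j ≤ n → clow / n ≤ t j - t (j - 1))
    (hgap_up : ∀ j : ℕ, 1 ≤ j → j ≤ n → t j - t (j - 1) ≤ cbar / n)
    (b : ℝ) (hb : 0 < b) (τ : ℝ) (hτ1 : b ≤ τ) (hτ2 : τ ≤ T - b) :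
    |(∑ j ∈ Finset.Icc 1 n, (t j - t (j - 1)) * (b⁻¹ * L ((t j - τ) / b))) - 1| ≤
      ℓ * cbar ^ 2 / (clow * n * b) + ℓ * cbar ^ 2 / (n ^ 2 * b ^ 2) := by
  have hn0 : (0 : ℝ) < n := by exact_mod_cast hn
  have hcbar : 0 < cbar := hclow.trans_le hcc
  have hℓ : 0 ≤ ℓ := (abs_nonneg _).trans (by simpa using hLip 1 0)
  have hL : LipschitzWith ℓ.toNNReal L :=
    .of_dist_le' fun x y => by simpa only [Real.dist_eq] using hLip x y
  have hsuppL : Function.support L ⊆ Icc (-1) 1 := fun x hx =>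
    abs_le.1 (not_lt.1 fun h => hx (hsupp x h))
  have hmono : ∀ i < n, t i ≤ t (i + 1) := fun i hi => by
    have := hgap_low (i + 1) (by omega) hi
    rw [add_tsub_cancel_right] at this
    linarith [div_pos hclow hn0]
  have hgap : ∀ i < n, t (i + 1) - t i ≤ cbar / n := fun i hi => by
    simpa using hgap_up (i + 1) (by omega) hi
  rw [Finset.sum_Icc_one_eq_sum_range, ← hint,
    ← intervalIntegral_rescaledKernel_comp_sub hsuppL hb (τ := τ) (a := t 0) (c := t n)
      (by linarith) (by linarith)]
  refine ((lipschitzWith_rescaledKernel_comp_sub hL hb τ).abs_right_riemann_sum_sub_integral_le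
    (support_rescaledKernel_comp_sub_subset hsuppL hb τ) (by linarith)
    (by positivity) hmono hgap).trans ?_
  push_cast [Real.coe_toNNReal _ hℓ, Real.coe_toNNReal _ hb.le]
  calc ℓ / b ^ 2 * (cbar / n) / 2 * (τ + b - (τ - b) + 2 * (cbar / n))
      = ℓ * cbar / (n * b) + ℓ * cbar ^ 2 / (n ^ 2 * b ^ 2) := by field_simp; ring
    _ ≤ ℓ * cbar ^ 2 / (clow * n * b) + ℓ * cbar ^ 2 / (n ^ 2 * b ^ 2) := by
        gcongr ?_ + _
        rw [div_le_div_iff₀ (by positivity) (by positivity)]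
        nlinarith [mul_nonneg (by positivity : 0 ≤ ℓ * cbar * n * b) (sub_nonneg.2 hcc)]

/-- Kernel weights are approximately normalized in the interior: if `L` is `ℓ`-Lipschitz,
vanishes outside `[-1,1]`, and integrates to one, and the grid `0 = t_0 < ⋯ < t_n = T`
has gaps between `c̲/n` and `c̄/n`, then for every bandwidth `b > 0` and every `τ` with
`b ≤ τ ≤ T - b`, `|∑_{j=1}^n (t_j - t_{j-1}) L_b(t_j - τ) - 1| ≤ ℓ c̄²/(c̲ n b) + ℓ c̄²/(n² b²)`,
where `L_b(u) = b⁻¹ L(u/b)`. -/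
theorem kernel_weight_sum_near_one
    (L : ℝ → ℝ) (ℓ : ℝ)
    (hLip : ∀ x y : ℝ, |L x - L y| ≤ ℓ * |x - y|)
    (hsupp : ∀ x : ℝ, 1 < |x| → L x = 0)
    (hint : ∫ x : ℝ, L x = 1)
    (T : ℝ) (hT : 0 < T)
    (n : ℕ) (hn : 1 ≤ n) (clow cbar : ℝ) (hclow : 0 < clow) (hcc : clow ≤ cbar)
    (t : ℕ → ℝ) (ht0 : t 0 = 0) (htn : t n = T)
    (hgap_low : ∀ j : ℕ, 1 ≤ j → j ≤ n → clow / n ≤ t j - t (j - 1))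
    (hgap_up : ∀ j : ℕ, 1 ≤ j → j ≤ n → t j - t (j - 1) ≤ cbar / n)
    (b : ℝ) (hb : 0 < b) (τ : ℝ) (hτ1 : b ≤ τ) (hτ2 : τ ≤ T - b) :
    |(∑ j ∈ Finset.Icc 1 n, (t j - t (j - 1)) * (b⁻¹ * L ((t j - τ) / b))) - 1| ≤
      ℓ * cbar ^ 2 / (clow * n * b) + ℓ * cbar ^ 2 / (n ^ 2 * b ^ 2) :=
  kernel_weight_sum_near_one_general L ℓ hLip hsupp hint T n hn clow cbar hclow hcc t ht0 htn
    hgap_low hgap_up b hb τ hτ1 hτ2
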